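/- Let v be a nowhere-vanishing smooth vector field on a smooth manifold X, and let γ : ℝ≥0 → X be a positive-time integral curve of v whose image has compact closure contained in the interior of X. Then there is no smooth function f : X → ℝ with df(v) > 0 everywhere on X. -/

import Mathlib

/-!
Along the trajectory, `(f ∘ γ)' = df(v) ∘ γ`, and the continuous positive function `df(v)`
is bounded below by some `ε > 0` on the compact closure `K` of the trajectory. Hence `f ∘ γ`
grows at least like `ε t` and is unbounded, whereas `f` is bounded on `K`.
-/

open scoped Manifold
open Set Filter

section

variable {𝕜 E H M F : Type*} [NontriviallyNormedField 𝕜] [NormedAddCommGroup E] [NormedSpace 𝕜 E]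
  [TopologicalSpace H] {I : ModelWithCorners 𝕜 E H} [TopologicalSpace M] [ChartedSpace H M]
  [NormedAddCommGroup F] [NormedSpace 𝕜 F]

theorem ContMDiff.continuous_mfderiv_apply [IsManifold I 1 M] {f : M → F}
    (hf : ContMDiff I 𝓘(𝕜, F) 1 f) {v : (x : M) → TangentSpace I x}
    (hv : Continuous fun x => (⟨x, v x⟩ : TangentBundle I M)) :
    Continuous fun x => (show F from mfderiv I 𝓘(𝕜, F) f x (v x)) :=
  continuous_snd.comp <| (tangentBundleModelSpaceHomeomorph 𝓘(𝕜, F)).continuous.comp <|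
    (hf.continuous_tangentMap le_rfl).comp hv

theorem MDifferentiableAt.hasDerivAt_comp {γ : 𝕜 → M} {t : 𝕜} {L : 𝕜 →L[𝕜] E}
    (hγ : HasMFDerivAt 𝓘(𝕜, 𝕜) I γ t L) {f : M → F} (hf : MDifferentiableAt I 𝓘(𝕜, F) f (γ t)) :
    HasDerivAt (f ∘ γ) (show F from mfderiv I 𝓘(𝕜, F) f (γ t) (L 1)) t := by
  rw [hasDerivAt_iff_hasFDerivAt]
  exact hasMFDerivAt_iff_hasFDerivAt.mp
    ((hf.hasMFDerivAt.comp t hγ).congr_mfderiv (by ext; exact (one_smul 𝕜 _).symm))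

end

theorem tendsto_atTop_of_le_hasDerivAt {g g' : ℝ → ℝ} {a ε : ℝ} (hε : 0 < ε)
    (hg : ∀ t ∈ Ici a, HasDerivAt g (g' t) t) (hg' : ∀ t ∈ Ici a, ε ≤ g' t) :
    Tendsto g atTop atTop := by
  have hgrowth : ∀ t ∈ Ici a, ε * (t - a) ≤ g t - g a := fun t ht =>
    (convex_Ici a).mul_sub_le_image_sub_of_le_deriv
      (fun t ht => (hg t ht).continuousAt.continuousWithinAt)
      (fun t ht => (hg t (interior_subset ht)).differentiableAt.differentiableWithinAt)
      (fun t ht => (hg t (interior_subset ht)).deriv ▸ hg' t (interior_subset ht)) a self_mem_Ici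
      t ht ht
  have hlinear : Tendsto (fun t => g a + ε * (t - a)) atTop atTop :=
    tendsto_atTop_add_const_left _ _ <|
      (tendsto_atTop_add_const_right _ (-a) tendsto_id).const_mul_atTop hε
  refine tendsto_atTop_mono' _ ?_ hlinear
  filter_upwards [eventually_ge_atTop a] with t ht
  linarith [hgrowth t ht]

theorem no_lyapunov_of_trapped_trajectory_general
    {E H M : Type*} [NormedAddCommGroup E] [NormedSpace ℝ E]
    [TopologicalSpace H] (I : ModelWithCorners ℝ E H)
    [TopologicalSpace M] [ChartedSpace H M] [IsManifold I (⊤ : ℕ∞) M]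
    (v : (x : M) → TangentSpace I x)
    (hvsmooth : ContMDiff I I.tangent (⊤ : ℕ∞) (fun x => (⟨x, v x⟩ : TangentBundle I M)))
    (γ : ℝ → M) (hγ : ∀ t ∈ Ici (0 : ℝ), HasMFDerivAt 𝓘(ℝ, ℝ) I γ t ((1 : ℝ →L[ℝ] ℝ).smulRight (v (γ t))))
    (hcompact : IsCompact (closure (γ '' Ici (0 : ℝ)))) :
    ¬ ∃ f : M → ℝ, ContMDiff I 𝓘(ℝ, ℝ) (⊤ : ℕ∞) f ∧
        ∀ x : M, (0:ℝ) < (show ℝ from mfderiv I 𝓘(ℝ, ℝ) f x (v x)) := by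
  rintro ⟨f, hf, hpos⟩
  have hγK : ∀ t ∈ Ici (0 : ℝ), γ t ∈ closure (γ '' Ici 0) := fun t ht =>
    subset_closure (mem_image_of_mem γ ht)
  have hf₁ : ContMDiff I 𝓘(ℝ, ℝ) 1 f := hf.of_le (by exact_mod_cast le_top)
  obtain ⟨x₀, -, hx₀⟩ := hcompact.exists_isMinOn ⟨γ 0, hγK 0 self_mem_Ici⟩
    (hf₁.continuous_mfderiv_apply hvsmooth.continuous).continuousOn
  have hfγ : Tendsto (f ∘ γ) atTop atTop :=
    tendsto_atTop_of_le_hasDerivAt (hpos x₀)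
      (fun t ht => ((hf₁.mdifferentiableAt one_ne_zero).hasDerivAt_comp (hγ t ht)).congr_deriv
        (congrArg _ (one_smul ℝ (v (γ t)))))
      (fun t ht => hx₀ (hγK t ht))
  obtain ⟨C, hC⟩ := (hcompact.image hf.continuous).bddAbove
  obtain ⟨t, ht, hCt⟩ := ((eventually_ge_atTop 0).and (hfγ.eventually_gt_atTop C)).exists
  exact hCt.not_ge (hC (mem_image_of_mem f (hγK t ht)))

/-- Let `v` be a nowhere-vanishing smooth vector field on a smooth manifold
`X` (possibly with boundary), and let `γ : ℝ≥0 → X` be a positive-time integral curve of `v`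
whose image has compact closure contained in the interior of `X`.  Then there is no smooth
function `f : X → ℝ` with `df(v) > 0` everywhere on `X` (i.e. no Lyapunov function for `v`). -/
theorem no_lyapunov_of_trapped_trajectory
    {E H M : Type*} [NormedAddCommGroup E] [NormedSpace ℝ E]
    [TopologicalSpace H] (I : ModelWithCorners ℝ E H)
    [TopologicalSpace M] [ChartedSpace H M] [IsManifold I (⊤ : ℕ∞) M]
    (v : (x : M) → TangentSpace I x) (hv : ∀ x, v x ≠ 0)
    (hvsmooth : ContMDiff I I.tangent (⊤ : ℕ∞) (fun x => (⟨x, v x⟩ : TangentBundle I M)))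
    (γ : ℝ → M) (hγ : ∀ t ∈ Ici (0 : ℝ), HasMFDerivAt 𝓘(ℝ, ℝ) I γ t ((1 : ℝ →L[ℝ] ℝ).smulRight (v (γ t))))
    (hcompact : IsCompact (closure (γ '' Ici (0 : ℝ))))
    (hint : closure (γ '' Ici (0 : ℝ)) ⊆ I.interior M) :
    ¬ ∃ f : M → ℝ, ContMDiff I 𝓘(ℝ, ℝ) (⊤ : ℕ∞) f ∧
        ∀ x : M, (0:ℝ) < (show ℝ from mfderiv I 𝓘(ℝ, ℝ) f x (v x)) :=
  no_lyapunov_of_trapped_trajectory_general I v hvsmooth γ hγ hcompact
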